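/- Explicit Upper Bound on Price of Frugality for BEST Objectives with XOS f: Let (A, f, c) be a multi-agent contract instance with n ≥ 1 agents and XOS f, let 0 < b < B ≤ 1, let φ be a BEST objective, and suppose p({i}) ≤ b for every agent i ∈ A. Then Max-φ(B) ≤ (1 + min(4n, 8·⌈8B/b⌉ − 8)) · Max-φ(b). In particular, Max-φ(B) = O(min(B/b, n)) · Max-φ(b). -/

import Mathlib

open scoped BigOperators ENNReal
open Finset

/-- Marginal contribution of agent `i` to set `S`: `f_S(i) = f(S) - f(S \ {i})`. -/
noncomputable def marginal {α : Type*} [DecidableEq α] (f : Finset α → ℝ) (S : Finset α)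
    (i : α) : ℝ :=
  f S - f (S.erase i)

/-- Payment needed to incentivize `S`, valued in `[0,∞]`, with the conventions
`0/0 = 0` and `x/0 = ∞` for `x > 0` (these hold for ENNReal division). -/
noncomputable def payment {α : Type*} [DecidableEq α] (f : Finset α → ℝ) (c : α → ℝ)
    (S : Finset α) : ℝ≥0∞ :=
  ∑ i ∈ S, ENNReal.ofReal (c i) / ENNReal.ofReal (marginal f S i)

/-- The principal's profit from incentivizing `S`: `g(S) = (1 - p(S)) · f(S)`. -/
noncomputable def profit {α : Type*} [DecidableEq α] (f : Finset α → ℝ) (c : α → ℝ)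
    (S : Finset α) : ℝ :=
  (1 - (payment f c S).toReal) * f S

/-- `f` is monotone. -/
def IsMonotoneFn {α : Type*} (f : Finset α → ℝ) : Prop :=
  ∀ ⦃S T : Finset α⦄, S ⊆ T → f S ≤ f T

/-- `f` is subadditive. -/
def IsSubadditive {α : Type*} [DecidableEq α] (f : Finset α → ℝ) : Prop :=
  ∀ S T : Finset α, f (S ∪ T) ≤ f S + f T

/-- `f` is submodular (decreasing marginal values). -/
def IsSubmodular {α : Type*} [DecidableEq α] (f : Finset α → ℝ) : Prop :=
  ∀ ⦃S T : Finset α⦄, S ⊆ T → ∀ i ∉ T, f (insert i T) - f T ≤ f (insert i S) - f S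

/-- `f` is additive. -/
def IsAdditive {α : Type*} [DecidableEq α] (f : Finset α → ℝ) : Prop :=
  ∀ S : Finset α, f S = ∑ i ∈ S, f {i}

/-- `f` is XOS: a finite max of nonnegative additive functions. -/
def IsXOS {α : Type*} (f : Finset α → ℝ) : Prop :=
  ∃ (k : ℕ) (a : Fin (k + 1) → α → ℝ),
    (∀ j i, 0 ≤ a j i) ∧
    ∀ S : Finset α, f S = Finset.univ.sup' Finset.univ_nonempty (fun j => ∑ i ∈ S, a j i)

/-- Agent `i` is light: it can be incentivized with payment at most `1/2`. -/
def isLight {α : Type*} [DecidableEq α] (f : Finset α → ℝ) (c : α → ℝ) (i : α) : Prop :=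
  payment f c {i} ≤ ENNReal.ofReal (1 / 2)

/-- `S` is budget-feasible for budget `B`. -/
def feasible {α : Type*} [DecidableEq α] (f : Finset α → ℝ) (c : α → ℝ) (B : ℝ)
    (S : Finset α) : Prop :=
  payment f c S ≤ ENNReal.ofReal B

/-- `S` is a budget-feasible set of light agents. -/
def feasibleLight {α : Type*} [DecidableEq α] (f : Finset α → ℝ) (c : α → ℝ) (B : ℝ)
    (S : Finset α) : Prop :=
  (∀ i ∈ S, isLight f c i) ∧ payment f c S ≤ ENNReal.ofReal B

/-- The maximum (supremum) value of objective `φ` over sets satisfying `P`. -/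
noncomputable def maxVal {α : Type*} (φ : Finset α → ℝ) (P : Finset α → Prop) : ℝ :=
  sSup (φ '' {S | P S})

/-- `φ` is a BEST objective for the instance `(f, c)`: it is nonnegative, sandwiched between
profit and reward, and satisfies `φ(S) ≤ f(S \ {i}) + φ({i})` for `i ∈ S`. -/
def IsBEST {α : Type*} [DecidableEq α] (f : Finset α → ℝ) (c : α → ℝ)
    (φ : Finset α → ℝ) : Prop :=
  (∀ S, 0 ≤ φ S) ∧
  (∀ S, φ S ≤ f S) ∧
  (∀ S, payment f c S ≤ 1 → (1 - (payment f c S).toReal) * f S ≤ φ S) ∧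
  (∀ S, ∀ i ∈ S, φ S ≤ f (S.erase i) + φ {i})

/-- `φ` is a BEST objective for the instance `(f, c)` restricted to sets satisfying `P`. -/
def IsBESTOn {α : Type*} [DecidableEq α] (f : Finset α → ℝ) (c : α → ℝ)
    (P : Finset α → Prop) (φ : Finset α → ℝ) : Prop :=
  (∀ S, P S → 0 ≤ φ S) ∧
  (∀ S, P S → φ S ≤ f S) ∧
  (∀ S, P S → payment f c S ≤ 1 → (1 - (payment f c S).toReal) * f S ≤ φ S) ∧
  (∀ S, P S → ∀ i ∈ S, φ S ≤ f (S.erase i) + φ {i})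

/-!
Fix a `B`-feasible `S` and an additive support `a` of the XOS function `f` at `S`. Since
`f_S(i) ≤ a_i`, the unit prices `q_i = c_i / a_i` satisfy `∑_S q ≤ p(S) ≤ B ≤ 1`, so at most one
agent has `q_i > 1/2`; by the BEST inequality `φ(S) ≤ f(S ∖ {i}) + φ({i})` removing it costs at
most `2 M`, where `M = Max-φ(b)`. Every other agent has `a_i ≤ 2 M` because its singleton is
`b`-feasible, which gives the `4n` bound. For the other bound, a group `u` with `∑_u q ≤ b/4`
contains a maximiser `T` of `f(T) - a(T)/2`; all marginals in `T` are at least `a_i/2`, so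
`p(T) ≤ b/2` and `a(u) ≤ 2 f(T) ≤ 4 φ(T) ≤ 4 M`. Greedily packing the agents with `q_i ≤ b/8`
into `⌈8B/b⌉ + 1` such groups and bounding the at most `⌈8B/b⌉` others one by one gives
`8⌈8B/b⌉ - 8`.
-/

section Packing

variable {α : Type*} [DecidableEq α] {r C : ℝ}

lemma exists_subset_sum_mem_Ioc {v : α → ℝ} (hr : 0 ≤ r) {s : Finset α}
    (hv : ∀ i ∈ s, v i ≤ r) (hs : r < ∑ i ∈ s, v i) :
    ∃ u ⊆ s, ∑ i ∈ u, v i ∈ Set.Ioc r (2 * r) := by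
  induction s using Finset.strongInduction with
  | _ s ih =>
  by_cases hle : ∑ i ∈ s, v i ≤ 2 * r
  · exact ⟨s, subset_rfl, hs, hle⟩
  obtain ⟨x, hx⟩ : s.Nonempty := nonempty_of_sum_ne_zero (f := v) (by linarith)
  have hsum := add_sum_erase s v hx
  obtain ⟨u, hu, hmem⟩ := ih (s.erase x) (erase_ssubset hx)
    (fun i hi => hv i (mem_of_mem_erase hi)) (by linarith [hv x hx])
  exact ⟨u, hu.trans (erase_subset x s), hmem⟩

lemma sum_le_succ_mul_of_chunks {v w : α → ℝ} (hr : 0 ≤ r) (hC : 0 ≤ C) (N : ℕ)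
    {s : Finset α} (hv : ∀ i ∈ s, v i ≤ r)
    (hchunk : ∀ u ⊆ s, ∑ i ∈ u, v i ≤ 2 * r → ∑ i ∈ u, w i ≤ C)
    (hs : ∑ i ∈ s, v i ≤ N * r) :
    ∑ i ∈ s, w i ≤ (N + 1) * C := by
  induction N generalizing s with
  | zero =>
    simp only [Nat.cast_zero, zero_mul, zero_add, one_mul] at hs ⊢
    exact hchunk s subset_rfl (by linarith)
  | succ N ih =>
    rcases le_or_gt (∑ i ∈ s, v i) r with hle | hlt
    · have hN : (0 : ℝ) ≤ N := N.cast_nonneg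
      push_cast
      nlinarith [hchunk s subset_rfl (by linarith)]
    obtain ⟨u, hus, hu_gt, hu_le⟩ := exists_subset_sum_mem_Ioc hr hv hlt
    have hrest : ∑ i ∈ s \ u, w i ≤ (N + 1) * C := by
      refine ih (fun i hi => hv i (mem_sdiff.mp hi).1)
        (fun u' hu' => hchunk u' (hu'.trans sdiff_subset)) ?_
      have := sum_sdiff hus (f := v)
      push_cast at hs
      linarith
    rw [← sum_sdiff hus]
    push_cast
    linarith [hchunk u hus hu_le]

lemma sum_le_of_chunks_of_items {q a : α → ℝ} {D : ℝ} (hr : 0 < r) (hC : 0 ≤ C) (hD : 0 ≤ D)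
    (N : ℕ) {s : Finset α} (hq : ∀ i ∈ s, 0 ≤ q i) (hitem : ∀ i ∈ s, a i ≤ D)
    (hchunk : ∀ u ⊆ s, ∑ i ∈ u, q i ≤ 2 * r → ∑ i ∈ u, a i ≤ C)
    (hs : ∑ i ∈ s, q i ≤ N * r) :
    ∑ i ∈ s, a i ≤ (N + 1) * C + N * D := by
  have hsmall : ∑ i ∈ s.filter (q · ≤ r), a i ≤ (N + 1) * C :=
    sum_le_succ_mul_of_chunks hr.le hC N (fun i hi => (mem_filter.mp hi).2)
      (fun u hu => hchunk u (hu.trans (filter_subset _ _)))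
      ((sum_le_sum_of_subset_of_nonneg (filter_subset _ _) fun i hi _ => hq i hi).trans hs)
  have hcard : ((s.filter (¬ q · ≤ r)).card : ℝ) ≤ N := by
    have hlow := card_nsmul_le_sum (s.filter (¬ q · ≤ r)) q r
      fun i hi => (not_le.mp (mem_filter.mp hi).2).le
    have hup := sum_le_sum_of_subset_of_nonneg (filter_subset (¬ q · ≤ r) s)
      fun i hi _ => hq i hi
    rw [nsmul_eq_mul] at hlow
    exact le_of_mul_le_mul_right (by linarith) hr
  have hlarge : ∑ i ∈ s.filter (¬ q · ≤ r), a i ≤ N * D :=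
    calc _ ≤ (s.filter (¬ q · ≤ r)).card • D :=
          sum_le_card_nsmul _ _ _ fun i hi => hitem i (mem_filter.mp hi).1
      _ ≤ N * D := by rw [nsmul_eq_mul]; exact mul_le_mul_of_nonneg_right hcard hD
  rw [← sum_filter_add_sum_filter_not s (q · ≤ r)]
  linarith

end Packing

section Support

variable {α : Type*} {f : Finset α → ℝ} {a : α → ℝ} {S : Finset α}

structure SupportsAt (a : α → ℝ) (f : Finset α → ℝ) (S : Finset α) : Prop where
  nonneg : ∀ i, 0 ≤ a i
  sum_le : ∀ T, ∑ i ∈ T, a i ≤ f T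
  sum_eq : ∑ i ∈ S, a i = f S

lemma IsXOS.exists_supportsAt (hf : IsXOS f) (S : Finset α) : ∃ a, SupportsAt a f S := by
  obtain ⟨k, a, ha0, hsup⟩ := hf
  obtain ⟨j, -, hj⟩ := exists_mem_eq_sup' univ_nonempty (fun j => ∑ i ∈ S, a j i)
  exact ⟨a j, ha0 j, fun T => hsup T ▸ le_sup' (fun j => ∑ i ∈ T, a j i) (mem_univ j),
    by rw [hsup S, hj]⟩

lemma SupportsAt.le_singleton (ha : SupportsAt a f S) (i : α) : a i ≤ f {i} := by
  simpa using ha.sum_le {i}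

lemma SupportsAt.marginal_le [DecidableEq α] (ha : SupportsAt a f S) {i : α} (hi : i ∈ S) :
    marginal f S i ≤ a i := by
  have := ha.sum_le (S.erase i)
  rw [marginal, ← ha.sum_eq, ← add_sum_erase S a hi]
  linarith

end Support

section Payment

variable {α : Type*} [DecidableEq α] {f : Finset α → ℝ} {c : α → ℝ} {φ : Finset α → ℝ}
  {S : Finset α} {i : α}

lemma feasible_empty (B : ℝ) : feasible f c B ∅ := by
  simp [feasible, payment]

lemma marginal_pos_of_payment_ne_top (hp : payment f c S ≠ ⊤) (hi : i ∈ S) (hci : 0 < c i) :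
    0 < marginal f S i := by
  by_contra! h
  refine ENNReal.sum_ne_top.mp hp i hi ?_
  rw [ENNReal.ofReal_eq_zero.mpr h, ENNReal.div_zero (ENNReal.ofReal_pos.mpr hci).ne']

lemma toReal_payment (hc : ∀ i, 0 ≤ c i) (hp : payment f c S ≠ ⊤) :
    (payment f c S).toReal = ∑ i ∈ S, c i / marginal f S i := by
  rw [payment, ENNReal.toReal_sum fun i hi => ENNReal.sum_ne_top.mp hp i hi]
  refine sum_congr rfl fun i hi => ?_
  rcases (hc i).eq_or_lt with h | h
  · simp [← h]
  · have hm := marginal_pos_of_payment_ne_top hp hi h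
    rw [← ENNReal.ofReal_div_of_pos hm, ENNReal.toReal_ofReal (div_nonneg (hc i) hm.le)]

lemma payment_le_ofReal_sum {x : α → ℝ} (hx : ∀ i ∈ S, 0 ≤ x i)
    (h : ∀ i ∈ S, c i ≤ x i * marginal f S i) :
    payment f c S ≤ ENNReal.ofReal (∑ i ∈ S, x i) := by
  rw [payment, ENNReal.ofReal_sum_of_nonneg hx]
  refine sum_le_sum fun i hi => ?_
  rcases le_or_gt (c i) 0 with hc | hc
  · simp [ENNReal.ofReal_eq_zero.mpr hc]
  have hm : 0 < marginal f S i := by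
    by_contra! hm
    nlinarith [h i hi, hx i hi]
  rw [← ENNReal.ofReal_div_of_pos hm]
  exact ENNReal.ofReal_le_ofReal ((div_le_iff₀ hm).mpr (h i hi))

lemma cost_le_marginal_of_payment_le_one (hp : payment f c S ≤ 1) (hi : i ∈ S) (hci : 0 < c i) :
    c i ≤ marginal f S i := by
  have hm := marginal_pos_of_payment_ne_top (ne_top_of_le_ne_top ENNReal.one_ne_top hp) hi hci
  have hterm : ENNReal.ofReal (c i / marginal f S i) ≤ 1 := by
    rw [ENNReal.ofReal_div_of_pos hm]
    exact (single_le_sum (f := fun j => ENNReal.ofReal (c j) / ENNReal.ofReal (marginal f S j))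
      (fun j _ => zero_le) hi).trans hp
  rwa [ENNReal.ofReal_le_one, div_le_one hm] at hterm

lemma exists_subset_half_le_marginal {a : α → ℝ} {u : Finset α} (ha : ∀ i ∈ u, 0 ≤ a i)
    (hu : ∑ i ∈ u, a i ≤ f u) :
    ∃ T ⊆ u, (∀ i ∈ T, a i / 2 ≤ marginal f T i) ∧ ∑ i ∈ u, a i ≤ 2 * f T := by
  obtain ⟨T, hTmem, hTmax⟩ := exists_max_image u.powerset
    (fun U => f U - (∑ i ∈ U, a i) / 2) ⟨∅, empty_mem_powerset u⟩
  have hTu := mem_powerset.mp hTmem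
  refine ⟨T, hTu, fun i hi => ?_, ?_⟩
  · have := hTmax (T.erase i) (mem_powerset.mpr ((erase_subset i T).trans hTu))
    have := add_sum_erase T a hi
    rw [marginal]
    linarith
  · have := hTmax u (mem_powerset_self u)
    have := sum_nonneg fun i hi => ha i (hTu hi)
    linarith

lemma exists_subset_payment_le_ofReal {a : α → ℝ} {u : Finset α} {t : ℝ}
    (ha : ∀ i ∈ u, 0 ≤ a i) (hu : ∑ i ∈ u, a i ≤ f u) (hc : ∀ i ∈ u, 0 ≤ c i)
    (hpos : ∀ i ∈ u, 0 < c i → 0 < a i) (hqt : ∑ i ∈ u, c i / a i ≤ t) :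
    ∃ T ⊆ u, payment f c T ≤ ENNReal.ofReal (2 * t) ∧ ∑ i ∈ u, a i ≤ 2 * f T := by
  obtain ⟨T, hTu, hmarg, hfT⟩ := exists_subset_half_le_marginal ha hu
  have hq0 : ∀ i ∈ u, 0 ≤ c i / a i := fun i hi => div_nonneg (hc i hi) (ha i hi)
  refine ⟨T, hTu, ?_, hfT⟩
  calc payment f c T ≤ ENNReal.ofReal (∑ i ∈ T, 2 * (c i / a i)) := by
        refine payment_le_ofReal_sum (fun i hi => by linarith [hq0 i (hTu hi)]) fun i hi => ?_
        rcases (hc i (hTu hi)).eq_or_lt with h | h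
        · simp [← h]
        calc c i = c i / a i * a i := (div_mul_cancel₀ _ (hpos i (hTu hi) h).ne').symm
          _ ≤ c i / a i * (2 * marginal f T i) :=
              mul_le_mul_of_nonneg_left (by linarith [hmarg i hi]) (hq0 i (hTu hi))
          _ = 2 * (c i / a i) * marginal f T i := by ring
    _ ≤ ENNReal.ofReal (2 * t) := by
        rw [← mul_sum]
        have := sum_le_sum_of_subset_of_nonneg hTu fun i hi _ => hq0 i hi
        exact ENNReal.ofReal_le_ofReal (by linarith)

lemma SupportsAt.sum_div_le_toReal_payment {a : α → ℝ} (ha : SupportsAt a f S)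
    (hc : ∀ i, 0 ≤ c i) (hp : payment f c S ≠ ⊤) :
    ∑ i ∈ S, c i / a i ≤ (payment f c S).toReal := by
  rw [toReal_payment hc hp]
  refine sum_le_sum fun i hi => ?_
  rcases (hc i).eq_or_lt with h | h
  · simp [← h]
  · exact div_le_div_of_nonneg_left (hc i) (marginal_pos_of_payment_ne_top hp hi h)
      (ha.marginal_le hi)

namespace IsBEST

lemma sub_le_singleton (hφ : IsBEST f c φ) (hf0 : f ∅ = 0) (hc : ∀ i, 0 ≤ c i)
    (hp : payment f c {i} ≤ 1) : f {i} - c i ≤ φ {i} := by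
  have hpne := ne_top_of_le_ne_top ENNReal.one_ne_top hp
  have hlow := hφ.2.2.1 {i} hp
  have hmarg : marginal f {i} i = f {i} := by simp [marginal, hf0]
  rw [toReal_payment hc hpne, sum_singleton, hmarg] at hlow
  rcases (hc i).eq_or_lt with h | h
  · simpa [← h] using hlow
  · have hfi := hmarg ▸ marginal_pos_of_payment_ne_top hpne (mem_singleton_self i) h
    rwa [sub_mul, div_mul_cancel₀ _ hfi.ne', one_mul] at hlow

lemma le_two_mul (hφ : IsBEST f c φ) (hf : 0 ≤ f S)
    (hp : payment f c S ≤ ENNReal.ofReal (1 / 2)) : f S ≤ 2 * φ S := by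
  have hlow := hφ.2.2.1 S (hp.trans (ENNReal.ofReal_le_one.mpr (by norm_num)))
  have := ENNReal.toReal_le_of_le_ofReal (by norm_num) hp
  nlinarith

lemma exists_light_subset {a : α → ℝ} {M : ℝ} (hφ : IsBEST f c φ) (ha : SupportsAt a f S)
    (hc : ∀ i, 0 ≤ c i) (hM0 : 0 ≤ M) (hφM : ∀ i, φ {i} ≤ M) (hsingM : ∀ i, f {i} - c i ≤ M)
    (hp : payment f c S ≤ 1) (hq : ∑ i ∈ S, c i / a i ≤ 1) :
    ∃ S' ⊆ S, (∀ i ∈ S', c i / a i ≤ 1 / 2) ∧ φ S ≤ ∑ i ∈ S', a i + 2 * M := by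
  by_cases hheavy : ∃ i ∈ S, 1 / 2 < c i / a i
  swap
  · push Not at hheavy
    exact ⟨S, subset_rfl, hheavy, by linarith [hφ.2.1 S, ha.sum_eq]⟩
  obtain ⟨i, hiS, hqi⟩ := hheavy
  have hq0 : ∀ j, 0 ≤ c j / a j := fun j => div_nonneg (hc j) (ha.nonneg j)
  refine ⟨S.erase i, erase_subset i S, fun j hj => ?_, ?_⟩
  · have hpair := sum_le_sum_of_subset_of_nonneg (insert_subset hiS (singleton_subset_iff.mpr
      (mem_of_mem_erase hj))) fun k _ _ => hq0 k
    rw [sum_pair (ne_of_mem_erase hj).symm] at hpair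
    linarith
  · have hci : 0 < c i := (hc i).lt_of_ne fun h => by simp [← h] at hqi; linarith
    have hcm := cost_le_marginal_of_payment_le_one hp hiS hci
    have := add_sum_erase S a hiS
    rw [marginal, ← ha.sum_eq] at hcm
    linarith [hφ.2.2.2 S i hiS, hφM i, hsingM i, ha.le_singleton i]

end IsBEST

end Payment

section MaxVal

variable {α : Type*} {φ : Finset α → ℝ} {P : Finset α → Prop}

lemma le_maxVal (hP : BddAbove (φ '' {S | P S})) {S : Finset α} (hS : P S) :
    φ S ≤ maxVal φ P :=
  le_csSup hP ⟨S, hS, rfl⟩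

lemma maxVal_le {x : ℝ} (hne : ∃ S, P S) (h : ∀ S, P S → φ S ≤ x) : maxVal φ P ≤ x :=
  let ⟨S, hS⟩ := hne
  csSup_le ⟨φ S, S, hS, rfl⟩ (Set.forall_mem_image.mpr h)

end MaxVal

lemma IsBEST.le_of_feasible {α : Type*} [DecidableEq α] [Fintype α] {f : Finset α → ℝ}
    {c : α → ℝ} {φ : Finset α → ℝ} {b B M : ℝ} {N : ℕ} {S : Finset α}
    (hφ : IsBEST f c φ) (hxos : IsXOS f) (hf : ∀ S, 0 ≤ f S) (hf0 : f ∅ = 0)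
    (hc : ∀ i, 0 ≤ c i) (hb : 0 < b) (hbB : b ≤ B) (hB : B ≤ 1)
    (hsing : ∀ i, payment f c {i} ≤ ENNReal.ofReal b)
    (hM : ∀ T, feasible f c b T → φ T ≤ M) (hBN : B ≤ N * (b / 8)) (hS : feasible f c B S) :
    φ S ≤ 2 * M + min (2 * M * Fintype.card α) ((N + 1) * (4 * M) + N * (2 * M)) := by
  have hM0 : 0 ≤ M := (hφ.1 ∅).trans (hM ∅ (feasible_empty b))
  have hsingM : ∀ i, f {i} - c i ≤ M := fun i =>
    (hφ.sub_le_singleton hf0 hc ((hsing i).trans (ENNReal.ofReal_le_one.mpr (hbB.trans hB)))).trans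
      (hM {i} (hsing i))
  have hp1 : payment f c S ≤ 1 := hS.trans (ENNReal.ofReal_le_one.mpr hB)
  have hpne := ne_top_of_le_ne_top ENNReal.one_ne_top hp1
  obtain ⟨a, ha⟩ := hxos.exists_supportsAt S
  have hpos : ∀ i ∈ S, 0 < c i → 0 < a i := fun i hi hci =>
    (marginal_pos_of_payment_ne_top hpne hi hci).trans_le (ha.marginal_le hi)
  have hqB : ∑ i ∈ S, c i / a i ≤ B := (ha.sum_div_le_toReal_payment hc hpne).trans
    (ENNReal.toReal_le_of_le_ofReal (hb.le.trans hbB) hS)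
  have hitem : ∀ i ∈ S, c i / a i ≤ 1 / 2 → a i ≤ 2 * M := by
    intro i hi hqi
    have hcai : c i ≤ a i / 2 := by
      rcases (hc i).eq_or_lt with h | h
      · linarith [ha.nonneg i]
      · linarith [(div_le_iff₀ (hpos i hi h)).mp hqi]
    linarith [ha.le_singleton i, hsingM i]
  have hchunk : ∀ u ⊆ S, ∑ i ∈ u, c i / a i ≤ 2 * (b / 8) → ∑ i ∈ u, a i ≤ 4 * M := by
    intro u hu hqu
    obtain ⟨T, -, hpT, haT⟩ := exists_subset_payment_le_ofReal (fun i _ => ha.nonneg i)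
      (ha.sum_le u) (fun i _ => hc i) (fun i hi => hpos i (hu hi)) hqu
    have hfT := hφ.le_two_mul (hf T) (hpT.trans (ENNReal.ofReal_le_ofReal (by linarith)))
    linarith [hM T (hpT.trans (ENNReal.ofReal_le_ofReal (by linarith)))]
  obtain ⟨S', hS'S, hlight, hφS⟩ := hφ.exists_light_subset ha hc hM0
    (fun i => hM {i} (hsing i)) hsingM hp1 (hqB.trans hB)
  have hitem' : ∀ i ∈ S', a i ≤ 2 * M := fun i hi => hitem i (hS'S hi) (hlight i hi)
  have hcard : ∑ i ∈ S', a i ≤ 2 * M * Fintype.card α :=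
    calc ∑ i ∈ S', a i ≤ S'.card • (2 * M) := sum_le_card_nsmul _ _ _ hitem'
      _ ≤ 2 * M * Fintype.card α := by
          rw [nsmul_eq_mul, mul_comm]
          gcongr
          exact card_le_univ S'
  have hpack := sum_le_of_chunks_of_items (by positivity) (by positivity) (by positivity) N
    (fun i _ => div_nonneg (hc i) (ha.nonneg i)) hitem' (fun u hu => hchunk u (hu.trans hS'S))
    ((sum_le_sum_of_subset_of_nonneg hS'S fun i _ _ => div_nonneg (hc i) (ha.nonneg i)).trans
      (hqB.trans hBN))
  linarith [le_min hcard hpack]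

/-- **Explicit Upper Bound on Price of Frugality for BEST Objectives with XOS f.** -/
theorem pof_upper_xos_best {α : Type*} [DecidableEq α] [Fintype α] [Nonempty α]
    (f : Finset α → ℝ) (c : α → ℝ) (φ : Finset α → ℝ)
    (hf01 : ∀ S, f S ∈ Set.Icc (0 : ℝ) 1) (hf0 : f ∅ = 0)
    (hxos : IsXOS f) (hc : ∀ i, 0 ≤ c i)
    (hφ : IsBEST f c φ)
    (b B : ℝ) (hb : 0 < b) (hbB : b < B) (hB : B ≤ 1)
    (hsing : ∀ i, payment f c {i} ≤ ENNReal.ofReal b) :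
    maxVal φ (feasible f c B) ≤
      (1 + min (4 * (Fintype.card α : ℝ)) (8 * ((⌈8 * B / b⌉ : ℤ) : ℝ) - 8)) *
        maxVal φ (feasible f c b) := by
  set M := maxVal φ (feasible f c b)
  set N := ⌈8 * B / b⌉₊
  have hM : ∀ T, feasible f c b T → φ T ≤ M := fun T => le_maxVal (Set.toFinite _).bddAbove
  have hM0 : 0 ≤ M := (hφ.1 ∅).trans (hM ∅ (feasible_empty b))
  have hNceil : ((⌈8 * B / b⌉ : ℤ) : ℝ) = N := 
    (natCast_ceil_eq_intCast_ceil (div_pos (by linarith) hb).le).symm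
  have hN8 : (8 : ℝ) < N := by
    have : (8 : ℝ) < 8 * B / b := by rw [lt_div_iff₀ hb]; linarith
    exact_mod_cast Nat.lt_ceil.mpr (by exact_mod_cast this)
  have hBN : B ≤ N * (b / 8) := by
    have := Nat.le_ceil (8 * B / b)
    rw [div_le_iff₀ hb] at this
    linarith
  have hn : (1 : ℝ) ≤ Fintype.card α := by exact_mod_cast Fintype.card_pos
  rw [hNceil, add_mul, one_mul, min_mul_of_nonneg _ _ hM0]
  refine maxVal_le ⟨∅, feasible_empty B⟩ fun S hS => ?_
  have hφS := hφ.le_of_feasible hxos (fun S => (hf01 S).1) hf0 hc hb hbB.le hB hsing hM hBN hS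
  have := min_le_left (2 * M * Fintype.card α) ((N + 1) * (4 * M) + N * (2 * M))
  have := min_le_right (2 * M * Fintype.card α) ((N + 1) * (4 * M) + N * (2 * M))
  have : M + min (2 * M * Fintype.card α) ((N + 1) * (4 * M) + N * (2 * M)) ≤
      min (4 * Fintype.card α * M) ((8 * N - 8) * M) := le_min (by nlinarith) (by nlinarith)
  linarith
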